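/- Let U be a finite set and P, Q two probability mass functions on U with P absolutely continuous with respect to Q. Let (Z_u)_{u∈U} be i.i.d. Exponential(1) random variables and define U_P := argmin_u Z_u/P(u) and U_Q := argmin_u Z_u/Q(u) (with x/0 = ∞, ties broken arbitrarily). Then almost surely, P(U_Q ≠ U_P | U_P) ≤ 1 − (1 + P(U_P)/Q(U_P))^{-1}. -/

import Mathlib

open MeasureTheory ProbabilityTheory Real Set
open scoped ENNReal NNReal

lemma expMeasure_apply_pml (r : ℝ) {s : Set ℝ} (hs : MeasurableSet s) :
    expMeasure r s = ∫⁻ x in s, exponentialPDF r x := by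
  rw [expMeasure, gammaMeasure, withDensity_apply _ hs]; rfl

lemma expMeasure_Iic_zero : expMeasure 1 (Iic 0) = 0 := by
  rw [expMeasure_apply_pml 1 measurableSet_Iic]
  have := lintegral_exponentialPDF_eq_antiDeriv (r := 1) one_pos 0
  simpa using this

lemma lintegral_expPDF_Ioi (r : ℝ) (hr : 0 < r) :
    ∫⁻ x in Ioi 0, exponentialPDF r x = 1 := by
  have h1 : ∫⁻ x, exponentialPDF r x = 1 := lintegral_exponentialPDF_eq_one hr
  have h2 : ∫⁻ x in Iic 0, exponentialPDF r x = 0 := by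
    have := lintegral_exponentialPDF_eq_antiDeriv hr 0
    simpa using this
  have := lintegral_add_compl (exponentialPDF r) (measurableSet_Iic (a := (0:ℝ))) (μ := volume)
  rw [compl_Iic] at this
  rw [← this, h2, zero_add] at h1
  exact h1

lemma expMeasure_Ioi {a : ℝ} (ha : 0 ≤ a) :
    expMeasure 1 (Ioi a) = ENNReal.ofReal (exp (-a)) := by
  have : IsProbabilityMeasure (expMeasure 1) := isProbabilityMeasure_expMeasure one_pos
  have hIic : expMeasure 1 (Iic a) = ENNReal.ofReal (1 - exp (-a)) := by
    rw [expMeasure_apply_pml 1 measurableSet_Iic, lintegral_exponentialPDF_eq_antiDeriv one_pos a,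
      if_pos ha, one_mul]
  have hcompl := measure_compl (μ := expMeasure 1) (measurableSet_Iic (a := a)) (measure_ne_top _ _)
  rw [compl_Iic] at hcompl
  have h1 : exp (-a) ≤ 1 := exp_le_one_iff.mpr (by linarith)
  rw [hcompl, hIic, measure_univ, ← ENNReal.ofReal_one,
    ← ENNReal.ofReal_sub _ (by linarith [exp_pos (-a)])]
  congr 1
  ring

lemma expMeasure_Ici {a : ℝ} (ha : 0 ≤ a) :
    expMeasure 1 (Ici a) = ENNReal.ofReal (exp (-a)) := by
  rw [← Ioi_union_left, measure_union _ (measurableSet_singleton a), expMeasure_Ioi ha]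
  · have : expMeasure 1 {a} = 0 :=
      (withDensity_absolutelyContinuous _ _) (measure_singleton a)
    rw [this, add_zero]
  · simp

lemma pi_exp_event {U : Type*} [Fintype U] [DecidableEq U] (u : U) (c : U → ℝ)
    (hc : ∀ v, 0 ≤ c v) (J : ℝ → Set ℝ) (hJ : J = Ioi ∨ J = Ici) :
    Measure.pi (fun _ : U => expMeasure 1) {z | ∀ v, v ≠ u → z v ∈ J (c v * z u)}
      = ENNReal.ofReal (1 / (1 + ∑ v ∈ Finset.univ.erase u, c v)) := by
  classical
  set ν := expMeasure 1 with hν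
  haveI hprob : IsProbabilityMeasure ν := isProbabilityMeasure_expMeasure one_pos
  have hJm : MeasurableSet {q : ℝ × ℝ | q.2 ∈ J q.1} := by
    rcases hJ with rfl | rfl
    · exact measurableSet_lt measurable_fst measurable_snd
    · exact measurableSet_le measurable_fst measurable_snd
  have hJν : ∀ a : ℝ, 0 ≤ a → ν (J a) = ENNReal.ofReal (exp (-a)) := by
    rcases hJ with rfl | rfl
    · exact fun a ha => expMeasure_Ioi ha
    · exact fun a ha => expMeasure_Ici ha
  obtain ⟨p, hp⟩ : ∃ p : U → Prop, p = fun v => v = u := ⟨_, rfl⟩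
  haveI : DecidablePred p := fun v => decidable_of_iff (v = u) (by rw [hp])
  have hpu : p u := by rw [hp]
  have hpv : ∀ v : {v // p v}, (v : U) = u := fun v => congrFun hp v.1 ▸ v.2
  haveI : Unique {v // p v} := ⟨⟨⟨u, hpu⟩⟩, fun v => Subtype.ext (by rw [hpv v]; exact (hpv _).symm ▸ rfl)⟩
  set S : Set ((({v // p v}) → ℝ) × (({v // ¬ p v}) → ℝ)) :=
    {w | ∀ v : {v // ¬ p v}, w.2 v ∈ J (c v * w.1 default)} with hS
  have hSmeas : MeasurableSet S := by
    have : S = ⋂ v : {v // ¬ p v},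
        (fun w : (({v // p v}) → ℝ) × (({v // ¬ p v}) → ℝ) =>
          (c v * w.1 default, w.2 v)) ⁻¹' {q : ℝ × ℝ | q.2 ∈ J q.1} := by
      ext w; simp [hS]
    rw [this]
    exact MeasurableSet.iInter fun v => hJm.preimage
      ((measurable_const.mul ((measurable_pi_apply _).comp measurable_fst)).prodMk
        ((measurable_pi_apply v).comp measurable_snd))
  have hmp := measurePreserving_piEquivPiSubtypeProd (fun _ : U => ν) p
  have hpre : (MeasurableEquiv.piEquivPiSubtypeProd (fun _ : U => ℝ) p) ⁻¹' S
      = {z | ∀ v, v ≠ u → z v ∈ J (c v * z u)} := by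
    ext z
    simp only [mem_preimage, MeasurableEquiv.piEquivPiSubtypeProd_apply, hS, mem_setOf_eq,
      Subtype.forall]
    rw [show ((default : {v // p v}) : U) = u from hpv _]
    constructor
    · intro h v hv
      exact h v (by rw [hp]; exact hv)
    · intro h v hv
      exact h v (by rw [hp] at hv; exact hv)
  have step1 : Measure.pi (fun _ : U => ν) {z | ∀ v, v ≠ u → z v ∈ J (c v * z u)}
      = ((Measure.pi fun _ : {v // p v} => ν).prod (Measure.pi fun _ : {v // ¬ p v} => ν)) S := by
    rw [← hpre]
    exact hmp.measure_preimage hSmeas.nullMeasurableSet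
  rw [step1, Measure.prod_apply hSmeas]
  have step2 : ∀ x : {v // p v} → ℝ,
      (Measure.pi fun _ : {v // ¬ p v} => ν) (Prod.mk x ⁻¹' S)
        = ∏ v : {v // ¬ p v}, ν (J (c v * x default)) := by
    intro x
    have : Prod.mk x ⁻¹' S = Set.pi univ (fun v : {v // ¬ p v} => J (c v * x default)) := by
      ext y; simp [hS]
    rw [this, Measure.pi_pi]
  simp_rw [step2]
  have hmp2 := measurePreserving_funUnique (β := ℝ) ν {v // p v}
  have key : (∫⁻ x : {v // p v} → ℝ, ∏ v : {v // ¬ p v}, ν (J (c ↑v * x default))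
      ∂(Measure.pi fun _ => ν)) = ∫⁻ t, ∏ v : {v // ¬ p v}, ν (J (c ↑v * t)) ∂ν :=
    by
      have h := (hmp2.lintegral_map_equiv (fun t => ∏ v : {v // ¬ p v}, ν (J (c ↑v * t)))).symm
      convert h using 2
      congr!
      rfl
  rw [key]
  set S0 := ∑ v ∈ Finset.univ.erase u, c v with hS0def
  have hS0 : 0 ≤ S0 := Finset.sum_nonneg fun v _ => hc v
  have h1S : (0:ℝ) < 1 + S0 := by linarith
  have hsub : ∑ v : {v // ¬ p v}, c ↑v = S0 := by
    rw [hS0def, Finset.sum_subtype (p := fun v => ¬ p v) (Finset.univ.erase u)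
      (fun v => by simp [Finset.mem_erase, hp]) c]
  have hae : ∀ᵐ t ∂ν, t ∈ Ioi (0:ℝ) := by
    rw [ae_iff]
    have h2 : {t : ℝ | ¬ t ∈ Ioi (0:ℝ)} = Iic 0 := by ext t; simp
    rw [h2, hν]
    exact expMeasure_Iic_zero
  have hcongr : ∫⁻ t, ∏ v : {v // ¬ p v}, ν (J (c ↑v * t)) ∂ν
      = ∫⁻ t, ENNReal.ofReal (exp (-(S0 * t))) ∂ν := by
    refine lintegral_congr_ae ?_
    filter_upwards [hae] with t ht
    have : ∀ v : {v // ¬ p v}, ν (J (c ↑v * t)) = ENNReal.ofReal (exp (-(c ↑v * t))) :=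
      fun v => hJν _ (mul_nonneg (hc v) ht.le)
    rw [Finset.prod_congr rfl (fun v _ => this v),
      ← ENNReal.ofReal_prod_of_nonneg (fun v _ => (exp_pos _).le), ← Real.exp_sum]
    congr 2
    rw [← hsub, Finset.sum_mul, ← neg_eq_iff_eq_neg]
    simp
  rw [hcongr]
  have hνd : ν = volume.withDensity (exponentialPDF 1) := rfl
  have hpdfmeas : ∀ r : ℝ, Measurable (exponentialPDF r) :=
    fun r => (measurable_exponentialPDFReal r).ennreal_ofReal
  have hGmeas : Measurable (fun t : ℝ => ENNReal.ofReal (exp (-(S0 * t)))) :=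
    (((measurable_id.const_mul S0).neg).exp).ennreal_ofReal
  rw [hνd, lintegral_withDensity_eq_lintegral_mul volume (hpdfmeas 1) hGmeas]
  rw [← lintegral_add_compl (μ := volume) _ (measurableSet_Iio (a := (0:ℝ)))]
  have hIio : ∫⁻ t in Iio (0:ℝ), (exponentialPDF 1 * fun t => ENNReal.ofReal (exp (-(S0 * t)))) t
      = 0 := by
    have h0 : ∀ t, t ∈ Iio (0:ℝ) →
        (exponentialPDF 1 * fun t => ENNReal.ofReal (exp (-(S0 * t)))) t
          = (fun _ : ℝ => (0:ℝ≥0∞)) t := fun t ht => by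
      simp [Pi.mul_apply, exponentialPDF_of_neg (mem_Iio.mp ht)]
    rw [setLIntegral_congr_fun_ae measurableSet_Iio (ae_of_all _ h0), lintegral_zero]
  rw [hIio, zero_add, compl_Iio, ← setLIntegral_congr (Ioi_ae_eq_Ici (a := (0:ℝ)))]
  have hIoi : ∫⁻ t in Ioi (0:ℝ), (exponentialPDF 1 * fun t => ENNReal.ofReal (exp (-(S0 * t)))) t
      = ∫⁻ t in Ioi (0:ℝ), ENNReal.ofReal (1 / (1 + S0)) * exponentialPDF (1 + S0) t := by
    refine setLIntegral_congr_fun_ae measurableSet_Ioi (ae_of_all _ (fun t (ht : 0 < t) => ?_))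
    simp only [Pi.mul_apply]
    rw [exponentialPDF_of_nonneg ht.le, exponentialPDF_of_nonneg ht.le,
      ← ENNReal.ofReal_mul (by positivity), ← ENNReal.ofReal_mul (by positivity)]
    congr 1
    rw [one_mul, ← exp_add]
    have h0 : (1 + S0) * exp (-((1 + S0) * t)) = (1 + S0) * exp (-t + -(S0 * t)) := by
      congr 1; congr 1; ring
    rw [h0]
    field_simp
  rw [hIoi, lintegral_const_mul _ (hpdfmeas (1 + S0)), lintegral_expPDF_Ioi _ h1S, mul_one]

lemma meas_exp_event {Ω U : Type*} [MeasurableSpace Ω] [Fintype U] [DecidableEq U]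
    [MeasurableSpace U] [MeasurableSingletonClass U]
    (μ : Measure Ω) [IsProbabilityMeasure μ]
    (Z : U → Ω → ℝ) (hmeas : ∀ u, Measurable (Z u))
    (hindep : iIndepFun Z μ)
    (hdist : ∀ u, μ.map (Z u) = expMeasure 1)
    (u : U) (c : U → ℝ) (hc : ∀ v, 0 ≤ c v) (J : ℝ → Set ℝ) (hJ : J = Ioi ∨ J = Ici) :
    μ {ω | ∀ v, v ≠ u → Z v ω ∈ J (c v * Z u ω)}
      = ENNReal.ofReal (1 / (1 + ∑ v ∈ Finset.univ.erase u, c v)) := by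
  haveI : IsProbabilityMeasure (expMeasure 1) := isProbabilityMeasure_expMeasure one_pos
  have hJm : MeasurableSet {q : ℝ × ℝ | q.2 ∈ J q.1} := by
    rcases hJ with rfl | rfl
    · exact measurableSet_lt measurable_fst measurable_snd
    · exact measurableSet_le measurable_fst measurable_snd
  have hF : Measurable (fun ω (v : U) => Z v ω) := measurable_pi_lambda _ hmeas
  have hT : MeasurableSet {z : U → ℝ | ∀ v, v ≠ u → z v ∈ J (c v * z u)} := by
    have : {z : U → ℝ | ∀ v, v ≠ u → z v ∈ J (c v * z u)} =
        ⋂ v ∈ ({v | v ≠ u} : Set U),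
          (fun z : U → ℝ => (c v * z u, z v)) ⁻¹' {q : ℝ × ℝ | q.2 ∈ J q.1} := by
      ext z; simp
    rw [this]
    exact MeasurableSet.biInter (to_countable _) fun v _ => hJm.preimage
      ((measurable_const.mul (measurable_pi_apply u)).prodMk (measurable_pi_apply v))
  have hjoint : μ.map (fun ω (v : U) => Z v ω) = Measure.pi (fun _ : U => expMeasure 1) := by
    refine (Measure.pi_eq (μ := fun _ : U => expMeasure 1) (μ' := μ.map (fun ω (v : U) => Z v ω)) fun s hs => ?_).symm
    rw [Measure.map_apply hF (MeasurableSet.univ_pi hs)]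
    have hpre : (fun ω (v : U) => Z v ω) ⁻¹' (Set.pi univ s) = ⋂ v ∈ Finset.univ, Z v ⁻¹' s v := by
      ext ω; simp
    rw [hpre, hindep.measure_inter_preimage_eq_mul Finset.univ (fun v _ => hs v)]
    exact Finset.prod_congr rfl fun v _ => by
      rw [← Measure.map_apply (hmeas v) (hs v), hdist v]
  have : {ω | ∀ v, v ≠ u → Z v ω ∈ J (c v * Z u ω)}
      = (fun ω (v : U) => Z v ω) ⁻¹' {z : U → ℝ | ∀ v, v ≠ u → z v ∈ J (c v * z u)} := rfl
  rw [this, ← Measure.map_apply hF hT, hjoint, pi_exp_event u c hc J hJ]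

/-- Poisson matching lemma (discrete / exponential version): let `U` be a finite set and
`P, Q` two probability mass functions on `U` with `P ≪ Q`. Let `(Z_u)` be i.i.d.
`Exponential(1)` random variables and let `U_P = argmin_u Z_u / P(u)` and
`U_Q = argmin_u Z_u / Q(u)` (with `x/0 = ∞`, ties broken arbitrarily; the argmin
properties are stated by cross-multiplication). Then almost surely,
`ℙ(U_Q ≠ U_P | U_P) ≤ 1 − (1 + P(U_P)/Q(U_P))⁻¹`. -/
theorem poisson_matching_lemma_discrete
    {Ω U : Type*} [MeasurableSpace Ω] [Fintype U] [MeasurableSpace U]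
    [MeasurableSingletonClass U]
    (μ : Measure Ω) [IsProbabilityMeasure μ]
    (P Q : U → ℝ) (hP0 : ∀ u, 0 ≤ P u) (hP1 : ∑ u, P u = 1)
    (hQ0 : ∀ u, 0 ≤ Q u) (hQ1 : ∑ u, Q u = 1)
    (habs : ∀ u, Q u = 0 → P u = 0)
    (Z : U → Ω → ℝ) (hmeas : ∀ u, Measurable (Z u))
    (hindep : iIndepFun Z μ)
    (hdist : ∀ u, μ.map (Z u) = expMeasure 1)
    (UP UQ : Ω → U) (hUPmeas : Measurable UP) (hUQmeas : Measurable UQ)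
    (hUPmin : ∀ᵐ ω ∂μ, ∀ v, P v * Z (UP ω) ω ≤ P (UP ω) * Z v ω)
    (hUQmin : ∀ᵐ ω ∂μ, ∀ v, Q v * Z (UQ ω) ω ≤ Q (UQ ω) * Z v ω) :
    ∀ᵐ ω ∂μ,
      (μ[Set.indicator {ω' | UQ ω' ≠ UP ω'} (fun _ => (1 : ℝ)) |
          MeasurableSpace.comap UP inferInstance]) ω
        ≤ 1 - (1 + P (UP ω) / Q (UP ω))⁻¹ := by
  classical
  -- basic setup
  have hm : MeasurableSpace.comap UP inferInstance ≤ ‹MeasurableSpace Ω› := hUPmeas.comap_le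
  set A : Set Ω := {ω' | UQ ω' ≠ UP ω'} with hAdef
  have hA : MeasurableSet A := by
    have heq : MeasurableSet {ω | UQ ω = UP ω} := by
      have : {ω | UQ ω = UP ω} = ⋃ u : U, (UQ ⁻¹' {u} ∩ UP ⁻¹' {u}) := by
        ext ω; simp [eq_comm]
      rw [this]
      exact MeasurableSet.iUnion fun u =>
        (hUQmeas (measurableSet_singleton u)).inter (hUPmeas (measurableSet_singleton u))
    exact heq.compl
  set f : Ω → ℝ := A.indicator (fun _ => (1:ℝ)) with hfdef
  have hf_int : Integrable f μ := (integrable_const 1).indicator hA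
  -- atoms
  set s : U → Set Ω := fun u => UP ⁻¹' {u} with hsdef
  have hs_meas : ∀ u, MeasurableSet (s u) := fun u => hUPmeas (measurableSet_singleton u)
  set h : U → ℝ := fun u => (μ (A ∩ s u)).toReal / (μ (s u)).toReal with hhdef
  set g : Ω → ℝ := fun ω => h (UP ω) with hgdef
  -- a.e. positivity of the Z's
  have hZpos : ∀ᵐ ω ∂μ, ∀ v, 0 < Z v ω := by
    rw [ae_all_iff]
    intro v
    have h0 : μ (Z v ⁻¹' (Iic 0)) = 0 := by
      rw [← Measure.map_apply (hmeas v) measurableSet_Iic, hdist v]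
      exact expMeasure_Iic_zero
    rw [ae_iff]
    convert h0 using 2
    ext ω; simp [not_lt]
  -- P (UP ω) > 0 whenever the atom is non-null
  have hPpos : ∀ u : U, μ (s u) ≠ 0 → 0 < P u := by
    intro u hu
    rcases lt_or_eq_of_le (hP0 u) with h' | h'
    · exact h'
    exfalso
    apply hu
    have : ∀ᵐ ω ∂μ, ω ∉ s u := by
      filter_upwards [hUPmin, hZpos] with ω hmin hpos
      intro hω
      have hUPu : UP ω = u := hω
      have hPv : ∀ v, P v ≤ 0 := by
        intro v
        have := hmin v
        rw [hUPu, ← h'] at this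
        simp only [zero_mul] at this
        nlinarith [hpos u]
      have : ∑ u : U, P u ≤ 0 := Finset.sum_nonpos fun v _ => hPv v
      rw [hP1] at this
      linarith
    simpa [ae_iff] using this
  -- key measure computations for a fixed atom
  have key : ∀ u : U, 0 < P u →
      μ (s u) = ENNReal.ofReal (P u) ∧
      ENNReal.ofReal (P u * (1 + P u / Q u)⁻¹) ≤ μ ({ω | UQ ω = UP ω} ∩ s u) := by
    intro u hPu
    have hQu : 0 < Q u := by
      rcases lt_or_eq_of_le (hQ0 u) with h' | h'
      · exact h'
      · exfalso; have := habs u h'.symm; linarith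
    set pu : U → ℝ := fun v => P v / P u with hpudef
    set qu : U → ℝ := fun v => Q v / Q u with hqudef
    set mx : U → ℝ := fun v => max (pu v) (qu v) with hmxdef
    have hpu0 : ∀ v, 0 ≤ pu v := fun v => div_nonneg (hP0 v) hPu.le
    have hqu0 : ∀ v, 0 ≤ qu v := fun v => div_nonneg (hQ0 v) hQu.le
    have hmx0 : ∀ v, 0 ≤ mx v := fun v => le_trans (hpu0 v) (le_max_left _ _)
    -- the three event measures
    have hElt := meas_exp_event μ Z hmeas hindep hdist u pu hpu0 Ioi (Or.inl rfl)
    have hEle := meas_exp_event μ Z hmeas hindep hdist u pu hpu0 Ici (Or.inr rfl)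
    have hEmx := meas_exp_event μ Z hmeas hindep hdist u mx hmx0 Ioi (Or.inl rfl)
    -- sum values
    have hsum_pu : ∑ v ∈ Finset.univ.erase u, pu v = (1 - P u) / P u := by
      rw [hpudef, ← Finset.sum_div, Finset.sum_erase_eq_sub (Finset.mem_univ u), hP1]
    have hsum_qu : ∑ v ∈ Finset.univ.erase u, qu v = (1 - Q u) / Q u := by
      rw [hqudef, ← Finset.sum_div, Finset.sum_erase_eq_sub (Finset.mem_univ u), hQ1]
    have hval_p : (1 : ℝ) / (1 + ∑ v ∈ Finset.univ.erase u, pu v) = P u := by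
      rw [hsum_pu]; field_simp; ring
    -- Part 1 : μ (s u) = ofReal (P u)
    have hsub1 : ∀ᵐ ω ∂μ, ω ∈ {ω | ∀ v, v ≠ u → Z v ω ∈ Ioi (pu v * Z u ω)} → ω ∈ s u := by
      filter_upwards [hUPmin] with ω hmin hω
      by_contra hne
      have hne' : UP ω ≠ u := hne
      have h1 := hω (UP ω) hne'
      rw [mem_Ioi, hpudef] at h1
      simp only at h1
      rw [div_mul_eq_mul_div, div_lt_iff₀ hPu] at h1
      have h2 := hmin u
      nlinarith [h1, h2]
    have hsub2 : ∀ᵐ ω ∂μ, ω ∈ s u → ω ∈ {ω | ∀ v, v ≠ u → Z v ω ∈ Ici (pu v * Z u ω)} := by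
      filter_upwards [hUPmin] with ω hmin hω
      intro v _
      have hUPu : UP ω = u := hω
      have h2 := hmin v
      rw [hUPu] at h2
      rw [mem_Ici, hpudef]
      rw [div_mul_eq_mul_div, div_le_iff₀ hPu]
      linarith [h2]
    have hle1 : μ {ω | ∀ v, v ≠ u → Z v ω ∈ Ioi (pu v * Z u ω)} ≤ μ (s u) :=
      measure_mono_ae hsub1
    have hle2 : μ (s u) ≤ μ {ω | ∀ v, v ≠ u → Z v ω ∈ Ici (pu v * Z u ω)} :=
      measure_mono_ae hsub2
    have hμsu : μ (s u) = ENNReal.ofReal (P u) := by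
      rw [hElt, hval_p] at hle1
      rw [hEle, hval_p] at hle2
      exact le_antisymm hle2 hle1
    refine ⟨hμsu, ?_⟩
    -- Part 2 : lower bound on the matching event
    have hsub3 : ∀ᵐ ω ∂μ, ω ∈ {ω | ∀ v, v ≠ u → Z v ω ∈ Ioi (mx v * Z u ω)} →
        ω ∈ {ω | UQ ω = UP ω} ∩ s u := by
      filter_upwards [hUPmin, hUQmin, hZpos] with ω hminP hminQ hpos hω
      have hUPu : UP ω = u := by
        by_contra hne
        have h1 := hω (UP ω) hne
        rw [mem_Ioi] at h1
        have h1' : pu (UP ω) * Z u ω < Z (UP ω) ω :=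
          lt_of_le_of_lt (mul_le_mul_of_nonneg_right (le_max_left _ _) (hpos u).le) h1
        rw [hpudef] at h1'
        simp only at h1'
        rw [div_mul_eq_mul_div, div_lt_iff₀ hPu] at h1'
        have h2 := hminP u
        nlinarith [h1', h2]
      have hUQu : UQ ω = u := by
        by_contra hne
        have h1 := hω (UQ ω) hne
        rw [mem_Ioi] at h1
        have h1' : qu (UQ ω) * Z u ω < Z (UQ ω) ω :=
          lt_of_le_of_lt (mul_le_mul_of_nonneg_right (le_max_right _ _) (hpos u).le) h1
        rw [hqudef] at h1'
        simp only at h1'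
        rw [div_mul_eq_mul_div, div_lt_iff₀ hQu] at h1'
        have h2 := hminQ u
        nlinarith [h1', h2]
      exact ⟨by simp [hUQu, hUPu], by simp [hsdef, hUPu]⟩
    have hle3 : μ {ω | ∀ v, v ≠ u → Z v ω ∈ Ioi (mx v * Z u ω)}
        ≤ μ ({ω | UQ ω = UP ω} ∩ s u) := measure_mono_ae hsub3
    rw [hEmx] at hle3
    refine le_trans ?_ hle3
    apply ENNReal.ofReal_le_ofReal
    -- real arithmetic
    set S2 := ∑ v ∈ Finset.univ.erase u, mx v with hS2def
    have hS2nn : 0 ≤ S2 := Finset.sum_nonneg fun v _ => hmx0 v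
    have hS2le : S2 ≤ (1 - P u) / P u + (1 - Q u) / Q u := by
      rw [hS2def, ← hsum_pu, ← hsum_qu, ← Finset.sum_add_distrib]
      exact Finset.sum_le_sum fun v _ => max_le_add_of_nonneg (hpu0 v) (hqu0 v)
    have hPu1 : P u ≤ 1 := by
      rw [← hP1]
      exact Finset.single_le_sum (fun v _ => hP0 v) (Finset.mem_univ u)
    have hQu1 : Q u ≤ 1 := by
      rw [← hQ1]
      exact Finset.single_le_sum (fun v _ => hQ0 v) (Finset.mem_univ u)
    have heqv : P u * (1 + P u / Q u)⁻¹ = (P u * Q u) / (P u + Q u) := by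
      rw [inv_eq_one_div]
      field_simp
      ring
    have hfrac : (P u + Q u) / (P u * Q u) = 1 / P u + 1 / Q u := by
      field_simp
      ring
    have hkey : 1 + S2 ≤ (P u + Q u) / (P u * Q u) := by
      have e1 : (1 - P u) / P u = 1 / P u - 1 := by field_simp
      have e2 : (1 - Q u) / Q u = 1 / Q u - 1 := by field_simp
      rw [hfrac]
      rw [e1, e2] at hS2le
      linarith
    have h1S2pos : (0:ℝ) < 1 + S2 := by linarith
    rw [heqv]
    calc (P u * Q u) / (P u + Q u) = 1 / ((P u + Q u) / (P u * Q u)) := by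
          rw [one_div_div]
      _ ≤ 1 / (1 + S2) := one_div_le_one_div_of_le h1S2pos hkey
  -- conditional expectation identification
  haveI : SigmaFinite (μ.trim hm) := by infer_instance
  have hg_meas_m : Measurable[MeasurableSpace.comap UP inferInstance] g := by
    have h1 : Measurable[MeasurableSpace.comap UP inferInstance] UP := Measurable.of_comap_le le_rfl
    exact (measurable_of_countable h).comp h1
  have hg_meas : Measurable g := (measurable_of_countable h).comp hUPmeas
  have hUne : Nonempty U := by
    by_contra hne
    rw [not_nonempty_iff] at hne
    rw [Finset.univ_eq_empty, Finset.sum_empty] at hP1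
    exact one_ne_zero hP1.symm
  have hg_int : Integrable g μ := by
    refine Integrable.mono' (integrable_const (Finset.univ.sup' Finset.univ_nonempty
      (fun u => |h u|))) hg_meas.aestronglyMeasurable ?_
    refine ae_of_all _ fun ω => ?_
    exact Finset.le_sup' (fun u => |h u|) (Finset.mem_univ (UP ω))
  -- per-atom integral identity
  have hatom : ∀ u : U, ∫ x in s u, g x ∂μ = ∫ x in s u, f x ∂μ := by
    intro u
    have hgconst : ∀ x ∈ s u, g x = h u := fun x hx => by
      rw [hgdef]; simp only; rw [show UP x = u from hx]
    rw [setIntegral_congr_fun (hs_meas u) hgconst, setIntegral_const]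
    rw [hfdef, setIntegral_indicator hA, setIntegral_const]
    simp only [smul_eq_mul, mul_one]
    rcases eq_or_ne (μ (s u)) 0 with hz | hz
    · have : μ (s u ∩ A) = 0 := measure_mono_null Set.inter_subset_left hz
      rw [measureReal_def, measureReal_def, hz, this]
      simp
    · have hdenom : (μ (s u)).toReal ≠ 0 :=
        ENNReal.toReal_ne_zero.mpr ⟨hz, measure_ne_top _ _⟩
      rw [hhdef]
      simp only [measureReal_def]
      rw [mul_comm, div_mul_cancel₀ _ hdenom, Set.inter_comm A (s u)]
  -- integral equality on all m-measurable sets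
  have hg_eq : ∀ t : Set Ω, MeasurableSet[MeasurableSpace.comap UP inferInstance] t → μ t < ∞ →
      ∫ x in t, g x ∂μ = ∫ x in t, f x ∂μ := by
    intro t ht _
    obtain ⟨w, hw, rfl⟩ := ht
    have hdecomp : UP ⁻¹' w = ⋃ u ∈ Finset.univ.filter (· ∈ w), s u := by
      ext ω; simp [hsdef]
    have hdisj : (↑(Finset.univ.filter (· ∈ w) : Finset U) : Set U).PairwiseDisjoint s := by
      intro a _ b _ hab
      refine Set.disjoint_left.mpr fun ω ha hb => hab ?_
      rw [← show UP ω = a from ha, ← show UP ω = b from hb]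
    rw [hdecomp,
      integral_biUnion_finset _ (fun u _ => hs_meas u) hdisj
        (fun u _ => hg_int.integrableOn),
      integral_biUnion_finset _ (fun u _ => hs_meas u) hdisj
        (fun u _ => hf_int.integrableOn)]
    exact Finset.sum_congr rfl fun u _ => hatom u
  have hg_sm : AEStronglyMeasurable[MeasurableSpace.comap UP inferInstance] g μ :=
    hg_meas_m.stronglyMeasurable.aestronglyMeasurable
  have hcond : g =ᵐ[μ] μ[f | MeasurableSpace.comap UP inferInstance] :=
    ae_eq_condExp_of_forall_setIntegral_eq hm hf_int
      (fun t _ _ => hg_int.integrableOn) hg_eq hg_sm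
  -- null atoms are a.e. avoided
  have hnull : ∀ᵐ ω ∂μ, μ (s (UP ω)) ≠ 0 := by
    rw [ae_iff]
    have hsub : {ω | ¬ μ (s (UP ω)) ≠ 0} ⊆ ⋃ u : {u : U // μ (s u) = 0}, s u.1 := by
      intro ω hω
      simp only [not_not, mem_setOf_eq] at hω
      exact Set.mem_iUnion.mpr ⟨⟨UP ω, hω⟩, rfl⟩
    exact measure_mono_null hsub (measure_iUnion_null fun u => u.2)
  -- final assembly
  filter_upwards [hcond, hnull] with ω hω hω0
  rw [← hω]
  have hPu : 0 < P (UP ω) := hPpos (UP ω) hω0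
  obtain ⟨hμs, hmatch⟩ := key (UP ω) hPu
  set u := UP ω with hudef
  set α := (1 + P u / Q u)⁻¹ with hαdef
  have hr0 : 0 ≤ P u / Q u := div_nonneg (hP0 u) (hQ0 u)
  have hα0 : 0 ≤ α := by rw [hαdef]; positivity
  have hα1 : α ≤ 1 := by
    rw [hαdef]
    apply inv_le_one_of_one_le₀
    linarith
  have hmeq : {ω' | UQ ω' = UP ω'} = Aᶜ := by
    ext ω'; simp [hAdef]
  have hAdiff : A ∩ s u = s u \ ({ω' | UQ ω' = UP ω'} ∩ s u) := by
    ext ω'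
    simp only [hAdef, mem_inter_iff, mem_setOf_eq, mem_diff, not_and]
    tauto
  have hdiffeq : μ (A ∩ s u) = μ (s u) - μ ({ω' | UQ ω' = UP ω'} ∩ s u) := by
    rw [hAdiff]
    refine measure_diff inter_subset_right ?_ (measure_ne_top _ _)
    exact ((hmeq ▸ hA.compl).inter (hs_meas u)).nullMeasurableSet
  have hnum_le : μ (A ∩ s u) ≤ ENNReal.ofReal (P u) - ENNReal.ofReal (P u * α) := by
    rw [hdiffeq, hμs]
    exact tsub_le_tsub le_rfl hmatch
  have hnum_le' : (μ (A ∩ s u)).toReal ≤ P u - P u * α := by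
    have h1 : (μ (A ∩ s u)).toReal
        ≤ (ENNReal.ofReal (P u) - ENNReal.ofReal (P u * α)).toReal := by
      refine ENNReal.toReal_mono ?_ hnum_le
      exact ne_of_lt (lt_of_le_of_lt (tsub_le_self) ENNReal.ofReal_lt_top)
    rw [← ENNReal.ofReal_sub _ (by positivity), ENNReal.toReal_ofReal (by nlinarith)] at h1
    exact h1
  have hdenomeq : (μ (s u)).toReal = P u := by rw [hμs, ENNReal.toReal_ofReal hPu.le]
  show (μ (A ∩ s u)).toReal / (μ (s u)).toReal ≤ 1 - α
  rw [hdenomeq, div_le_iff₀ hPu]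
  nlinarith
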